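/- Let n ≥ 2, 0 ≤ h ≤ n−1, X = {(x,y) : last n−h coordinates of y are 0} in HCN_n, and S = N(X) its neighborhood. Then for every subcube x'Q_n with x' ≠ x, |S ∩ x'Q_n| ≤ 1. -/

import Mathlib

/-- The hypercube graph on `Fin n → Bool`: adjacency = Hamming distance 1. -/
def Qn (n : ℕ) : SimpleGraph (Fin n → Bool) where
  Adj x y := (Finset.univ.filter fun i => x i ≠ y i).card = 1
  symm := by
    constructor
    intro x y h
    convert h using 2
    ext i
    simp [ne_comm]
  loopless := by
    constructor
    intro x h
    simp at h

/-- Bitwise complement. -/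
def bcomp (n : ℕ) (x : Fin n → Bool) : Fin n → Bool := fun i => !(x i)

/-- Crossing-edge adjacency in HCN_n. -/
def CAdj (n : ℕ) (u v : (Fin n → Bool) × (Fin n → Bool)) : Prop :=
  (u.1 ≠ u.2 ∧ v = (u.2, u.1)) ∨
  (u.1 = u.2 ∧ v = (bcomp n u.1, bcomp n u.1)) ∨
  (v.1 ≠ v.2 ∧ u = (v.2, v.1)) ∨
  (v.1 = v.2 ∧ u = (bcomp n v.1, bcomp n v.1))

/-- The hierarchical cubic network HCN_n. -/
def HCN (n : ℕ) : SimpleGraph ((Fin n → Bool) × (Fin n → Bool)) where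
  Adj u v := u ≠ v ∧ ((u.1 = v.1 ∧ (Qn n).Adj u.2 v.2) ∨ CAdj n u v)
  symm := by
    constructor
    rintro u v ⟨hne, h⟩
    refine ⟨hne.symm, ?_⟩
    rcases h with ⟨h1, h2⟩ | h | h | h | h
    · exact Or.inl ⟨h1.symm, (Qn n).adj_symm h2⟩
    · exact Or.inr (Or.inr (Or.inr (Or.inl h)))
    · exact Or.inr (Or.inr (Or.inr (Or.inr h)))
    · exact Or.inr (Or.inl h)
    · exact Or.inr (Or.inr (Or.inl h))
  loopless := by constructor; intro u h; exact h.1 rfl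

/-!
Edges inside a subcube stay in it, so a vertex of `S` lying in `x'Q_n` is the crossing neighbour
of some `(x, y) ∈ X`. Crossing neighbours form an involution, and the crossing neighbour of
`(x, y)` lies in `x'Q_n` only for `y = x'`, or for `y = x` when `x' = x̄`. Both choices of `y`
can lie in `X` only if `x` and `x̄` both vanish at the last coordinate, which `h ≤ n - 1`
forbids.
-/

def crossNeighbor (n : ℕ) (u : (Fin n → Bool) × (Fin n → Bool)) :
    (Fin n → Bool) × (Fin n → Bool) :=
  if u.1 = u.2 then (bcomp n u.1, bcomp n u.1) else (u.2, u.1)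

@[simp]
lemma bcomp_bcomp (n : ℕ) (x : Fin n → Bool) : bcomp n (bcomp n x) = x := by
  funext i
  simp [bcomp]

lemma crossNeighbor_crossNeighbor (n : ℕ) (u : (Fin n → Bool) × (Fin n → Bool)) :
    crossNeighbor n (crossNeighbor n u) = u := by
  obtain ⟨x, y⟩ := u
  by_cases hxy : x = y
  · subst hxy
    simp [crossNeighbor]
  · simp [crossNeighbor, hxy, Ne.symm hxy]

lemma eq_crossNeighbor_of_cAdj {n : ℕ} {u v : (Fin n → Bool) × (Fin n → Bool)}
    (huv : CAdj n u v) : v = crossNeighbor n u := by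
  rcases huv with ⟨hne, rfl⟩ | ⟨heq, rfl⟩ | ⟨hne, rfl⟩ | ⟨heq, rfl⟩
  · simp [crossNeighbor, hne]
  · simp [crossNeighbor, heq]
  · simpa [crossNeighbor, hne] using (crossNeighbor_crossNeighbor n v).symm
  · simpa [crossNeighbor, heq] using (crossNeighbor_crossNeighbor n v).symm

lemma HCN.eq_crossNeighbor_of_adj_of_fst_ne {n : ℕ} {u v : (Fin n → Bool) × (Fin n → Bool)}
    (huv : (HCN n).Adj u v) (hfst : u.1 ≠ v.1) : v = crossNeighbor n u := by
  rcases huv with ⟨-, ⟨heq, -⟩ | hc⟩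
  · exact absurd heq hfst
  · exact eq_crossNeighbor_of_cAdj hc

lemma snd_eq_of_crossNeighbor_fst {n : ℕ} {x y x' : Fin n → Bool}
    (hfst : (crossNeighbor n (x, y)).1 = x') (hx' : x' ≠ x) :
    y = x' ∨ (y = x ∧ x' = bcomp n x) := by
  by_cases hxy : x = y
  · subst hxy
    simp_all [crossNeighbor]
  · simp_all [crossNeighbor]

lemma exists_crossNeighbor_of_adj_subcube {n : ℕ} {x x' : Fin n → Bool}
    {T : Set (Fin n → Bool)} {v : (Fin n → Bool) × (Fin n → Bool)}
    (hv : ∃ u, (u.1 = x ∧ u.2 ∈ T) ∧ (HCN n).Adj u v)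
    (hv' : v.1 = x') (hx' : x' ≠ x) :
    ∃ y ∈ T, v = crossNeighbor n (x, y) ∧ (y = x' ∨ (y = x ∧ x' = bcomp n x)) := by
  obtain ⟨⟨_, y⟩, ⟨rfl, hy⟩, hadj⟩ := hv
  have hv_eq := HCN.eq_crossNeighbor_of_adj_of_fst_ne hadj (by rw [hv']; exact hx'.symm)
  exact ⟨y, hy, hv_eq, snd_eq_of_crossNeighbor_fst (hv_eq ▸ hv') hx'⟩

lemma bcomp_apply_ne {n : ℕ} (x : Fin n → Bool) (i : Fin n) : bcomp n x i ≠ x i := by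
  simp [bcomp]

open scoped Classical in
theorem stmt14_general (n h : ℕ) (hh : h ≤ n - 1) (x : Fin n → Bool) :
    letI X : Finset ((Fin n → Bool) × (Fin n → Bool)) :=
      Finset.univ.filter (fun v => v.1 = x ∧ ∀ i : Fin n, h ≤ (i : ℕ) → v.2 i = false)
    letI S : Finset ((Fin n → Bool) × (Fin n → Bool)) :=
      Finset.univ.filter (fun v => v ∉ X ∧ ∃ u ∈ X, (HCN n).Adj u v)
    ∀ x' : Fin n → Bool, x' ≠ x → (S.filter (fun v => v.1 = x')).card ≤ 1 := by
  intro x' hx'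
  obtain ⟨i₀, -⟩ := Function.ne_iff.mp hx'
  let last : Fin n := ⟨n - 1, by have := i₀.pos; omega⟩
  have hlast : h ≤ (last : ℕ) := hh
  let T : Set (Fin n → Bool) := {y | ∀ i : Fin n, h ≤ (i : ℕ) → y i = false}
  refine Finset.card_le_one.2 fun a ha b hb => ?_
  simp only [Finset.mem_filter, Finset.mem_univ, true_and] at ha hb
  obtain ⟨ya, hya0, rfl, hya⟩ := exists_crossNeighbor_of_adj_subcube (T := T) ha.1.2 ha.2 hx'
  obtain ⟨yb, hyb0, rfl, hyb⟩ := exists_crossNeighbor_of_adj_subcube (T := T) hb.1.2 hb.2 hx'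
  have not_both (hx'x : x' = bcomp n x) (hx'T : x' ∈ T) (hxT : x ∈ T) : False :=
    bcomp_apply_ne x last (by rw [← hx'x, hx'T last hlast, hxT last hlast])
  suffices ya = yb by rw [this]
  rcases hya with hya | ⟨hya, hx'a⟩ <;> rcases hyb with hyb | ⟨hyb, hx'b⟩
  · exact hya.trans hyb.symm
  · exact (not_both hx'b (hya ▸ hya0) (hyb ▸ hyb0)).elim
  · exact (not_both hx'a (hyb ▸ hyb0) (hya ▸ hya0)).elim
  · exact hya.trans hyb.symm

open scoped Classical in
/-- With X the subcube slice in xQ_n and S = N(X), every other subcube x'Q_n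
contains at most one vertex of S. -/
theorem stmt14 (n h : ℕ) (hn : 2 ≤ n) (hh : h ≤ n - 1) (x : Fin n → Bool) :
    letI X : Finset ((Fin n → Bool) × (Fin n → Bool)) :=
      Finset.univ.filter (fun v => v.1 = x ∧ ∀ i : Fin n, h ≤ (i : ℕ) → v.2 i = false)
    letI S : Finset ((Fin n → Bool) × (Fin n → Bool)) :=
      Finset.univ.filter (fun v => v ∉ X ∧ ∃ u ∈ X, (HCN n).Adj u v)
    ∀ x' : Fin n → Bool, x' ≠ x → (S.filter (fun v => v.1 = x')).card ≤ 1 :=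
  stmt14_general n h hh x
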